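/- arXiv:2506.08992 — 3 statements merged into one kernel-verified Lean document; each statement's English description precedes it below -/
import Mathlib

section
/- For all constants a^B, η^B, φ^B > 0 and every horizon T > 0, the broker Riccati terminal-value problem γ'(t) = 2(φ^B − (a^B)²/η^B) + (2a^B/η^B)·γ(t) − (1/(2η^B))·γ(t)² for t ∈ [0,T], with γ(T) = 0, has a unique C¹ solution γ^B on [0,T]. Moreover this solution is real-analytic on [0,T] and satisfies, for every t ∈ [0,T]: γ^B(t) < 2a^B and |γ^B(t) − 2a^B| ≤ 2·max(a^B, √(η^B φ^B)). -/
open Set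

/-- The broker Riccati terminal-value problem: a function `γ` is a C¹ solution on `[0,T]` of
`γ'(t) = 2(φᴮ − (aᴮ)²/ηᴮ) + (2aᴮ/ηᴮ)·γ(t) − (1/(2ηᴮ))·γ(t)²` with terminal condition
`γ(T) = 0`. -/
def IsBrokerRiccatiSol (aB ηB φB T : ℝ) (γ : ℝ → ℝ) : Prop :=
  ContDiffOn ℝ 1 γ (Icc 0 T) ∧ γ T = 0 ∧
    ∀ t ∈ Icc (0 : ℝ) T,
      HasDerivWithinAt γ
        (2 * (φB - aB ^ 2 / ηB) + (2 * aB / ηB) * γ t - (1 / (2 * ηB)) * (γ t) ^ 2)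
        (Icc 0 T) t

lemma analyticAt_rsinh {x : ℝ} : AnalyticAt ℝ Real.sinh x := by
  have h : Real.sinh = fun y : ℝ => (Real.exp y - Real.exp (-y)) / 2 :=
    funext fun y => Real.sinh_eq y
  rw [h]
  exact ((analyticAt_rexp.sub (analyticAt_rexp.comp analyticAt_id.neg)).div
    analyticAt_const two_ne_zero)

lemma analyticAt_rcosh {x : ℝ} : AnalyticAt ℝ Real.cosh x := by
  have h : Real.cosh = fun y : ℝ => (Real.exp y + Real.exp (-y)) / 2 :=
    funext fun y => Real.cosh_eq y
  rw [h]
  exact ((analyticAt_rexp.add (analyticAt_rexp.comp analyticAt_id.neg)).div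
    analyticAt_const two_ne_zero)

lemma riccati_alg (a η ω u v φ : ℝ) (hη : η ≠ 0) (hv : v ≠ 0) (hφ : φ = η * ω ^ 2) :
    2 * (φ - a ^ 2 / η) + (2 * a / η) * (2 * a - 2 * η * ω * (u / v))
      - (1 / (2 * η)) * (2 * a - 2 * η * ω * (u / v)) ^ 2
      = -(2 * η * ω * ((-ω * v * v - u * (-ω * u)) / v ^ 2)) := by
  subst hφ; field_simp; ring

lemma bound_alg (a w s C : ℝ) (ha : 0 < a) (hw : 0 < w) (hs : 0 ≤ s) (hsc : s ≤ C) :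
    2 * w * (s + a / w * C) ≤ 2 * max a w * (C + a / w * s) := by
  have key : 2 * w * (s + a / w * C) * w ≤ 2 * max a w * (C + a / w * s) * w := by
    have e1 : 2 * w * (s + a / w * C) * w = 2 * w * w * s + 2 * w * a * C := by
      field_simp
    have e2 : 2 * max a w * (C + a / w * s) * w
        = 2 * max a w * w * C + 2 * max a w * a * s := by field_simp
    rw [e1, e2]
    rcases le_total a w with h | h
    · rw [max_eq_right h]
      nlinarith [mul_nonneg (mul_nonneg hw.le (sub_nonneg.2 h)) (sub_nonneg.2 hsc)]
    · rw [max_eq_left h]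
      nlinarith [mul_nonneg hs (mul_nonneg (sub_nonneg.2 h) (by linarith : (0:ℝ) ≤ a + w))]
  exact le_of_mul_le_mul_right key hw

theorem riccati_broker_existence_uniqueness_and_bounds
    (aB ηB φB T : ℝ) (haB : 0 < aB) (hηB : 0 < ηB) (hφB : 0 < φB) (hT : 0 < T) :
    (∃ γ : ℝ → ℝ, IsBrokerRiccatiSol aB ηB φB T γ) ∧
    (∀ γ₁ γ₂ : ℝ → ℝ, IsBrokerRiccatiSol aB ηB φB T γ₁ → IsBrokerRiccatiSol aB ηB φB T γ₂ →
      ∀ t ∈ Icc (0 : ℝ) T, γ₁ t = γ₂ t) ∧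
    (∀ γ : ℝ → ℝ, IsBrokerRiccatiSol aB ηB φB T γ →
      AnalyticOn ℝ γ (Icc 0 T) ∧
      ∀ t ∈ Icc (0 : ℝ) T,
        γ t < 2 * aB ∧ |γ t - 2 * aB| ≤ 2 * max aB (Real.sqrt (ηB * φB))) := by
  have hη' : ηB ≠ 0 := hηB.ne'
  set ω : ℝ := Real.sqrt (φB / ηB) with hωdef
  have hω : 0 < ω := Real.sqrt_pos.2 (div_pos hφB hηB)
  have hω2 : ω ^ 2 = φB / ηB := Real.sq_sqrt (div_pos hφB hηB).le
  have hφeq : φB = ηB * ω ^ 2 := by rw [hω2]; field_simp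
  set c : ℝ := aB / (ηB * ω) with hcdef
  have hc : 0 < c := div_pos haB (mul_pos hηB hω)
  set U : ℝ → ℝ := fun t => Real.sinh (ω * (T - t)) + c * Real.cosh (ω * (T - t)) with hUdef
  set V : ℝ → ℝ := fun t => Real.cosh (ω * (T - t)) + c * Real.sinh (ω * (T - t)) with hVdef
  set γ0 : ℝ → ℝ := fun t => 2 * aB - 2 * ηB * ω * (U t / V t) with hγ0def
  have harg : ∀ t ∈ Icc (0:ℝ) T, 0 ≤ ω * (T - t) := fun t ht =>
    mul_nonneg hω.le (by linarith [ht.2])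
  have hVpos : ∀ t ∈ Icc (0:ℝ) T, 0 < V t := by
    intro t ht
    have h1 := Real.cosh_pos (ω * (T - t))
    have h2 : 0 ≤ Real.sinh (ω * (T - t)) := Real.sinh_nonneg_iff.2 (harg t ht)
    simp only [hVdef]
    nlinarith
  have hUpos : ∀ t ∈ Icc (0:ℝ) T, 0 < U t := by
    intro t ht
    have h1 := Real.cosh_pos (ω * (T - t))
    have h2 : 0 ≤ Real.sinh (ω * (T - t)) := Real.sinh_nonneg_iff.2 (harg t ht)
    simp only [hUdef]
    nlinarith
  have hderiv : ∀ t : ℝ, V t ≠ 0 →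
      HasDerivAt γ0
        (2 * (φB - aB ^ 2 / ηB) + (2 * aB / ηB) * γ0 t - (1 / (2 * ηB)) * (γ0 t) ^ 2) t := by
    intro t hVt
    have hid : HasDerivAt (fun t : ℝ => ω * (T - t)) (-ω) t := by
      simpa using ((hasDerivAt_id t).const_sub T).const_mul ω
    have hS : HasDerivAt (fun t : ℝ => Real.sinh (ω * (T - t)))
        (Real.cosh (ω * (T - t)) * -ω) t := hid.sinh
    have hC : HasDerivAt (fun t : ℝ => Real.cosh (ω * (T - t)))
        (Real.sinh (ω * (T - t)) * -ω) t := hid.cosh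
    have hU' : HasDerivAt U (-ω * V t) t := by
      have h := hS.add (hC.const_mul c)
      rw [hUdef]
      convert h using 1
      · rfl
      · rfl
      · rfl
      simp only [hVdef]
      ring
    have hV' : HasDerivAt V (-ω * U t) t := by
      have h := hC.add (hS.const_mul c)
      rw [hVdef]
      convert h using 1
      · rfl
      · rfl
      · rfl
      simp only [hUdef]
      ring
    have hg := ((hU'.div hV' hVt).const_mul (2 * ηB * ω)).const_sub (2 * aB)
    rw [hγ0def]
    simp only
    convert hg using 1
    · rfl
    · rfl
    · rfl
    exact riccati_alg aB ηB ω (U t) (V t) φB hη' hVt hφeq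
  have hγ0an : ∀ t : ℝ, V t ≠ 0 → AnalyticAt ℝ γ0 t := by
    intro t hVt
    have hinner : AnalyticAt ℝ (fun t : ℝ => ω * (T - t)) t :=
      analyticAt_const.mul (analyticAt_const.sub analyticAt_id)
    have hS : AnalyticAt ℝ (fun t : ℝ => Real.sinh (ω * (T - t))) t :=
      analyticAt_rsinh.comp hinner
    have hC : AnalyticAt ℝ (fun t : ℝ => Real.cosh (ω * (T - t))) t :=
      analyticAt_rcosh.comp hinner
    have hUan : AnalyticAt ℝ U t := by rw [hUdef]; exact hS.add (analyticAt_const.mul hC)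
    have hVan : AnalyticAt ℝ V t := by rw [hVdef]; exact hC.add (analyticAt_const.mul hS)
    rw [hγ0def]
    exact analyticAt_const.sub (analyticAt_const.mul (hUan.div hVan hVt))
  have hterm : γ0 T = 0 := by
    simp only [hγ0def, hUdef, hVdef, sub_self, mul_zero, Real.sinh_zero, Real.cosh_zero]
    rw [hcdef]
    field_simp
    ring
  have hsol : IsBrokerRiccatiSol aB ηB φB T γ0 :=
    ⟨fun t ht => ((hγ0an t (hVpos t ht).ne').contDiffAt.of_le le_top).contDiffWithinAt,
      hterm, fun t ht => (hderiv t (hVpos t ht).ne').hasDerivWithinAt⟩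
  have hsqrt : Real.sqrt (ηB * φB) = ηB * ω := by
    rw [hφeq, show ηB * (ηB * ω ^ 2) = (ηB * ω) ^ 2 by ring,
      Real.sqrt_sq (mul_pos hηB hω).le]
  have hbound : ∀ t ∈ Icc (0:ℝ) T,
      γ0 t < 2 * aB ∧ |γ0 t - 2 * aB| ≤ 2 * max aB (Real.sqrt (ηB * φB)) := by
    intro t ht
    have hV := hVpos t ht
    have hU := hUpos t ht
    have hpos : 0 < 2 * ηB * ω * (U t / V t) :=
      mul_pos (by positivity) (div_pos hU hV)
    constructor
    · simp only [hγ0def]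
      linarith
    · rw [hsqrt]
      have habs : γ0 t - 2 * aB = -(2 * ηB * ω * (U t / V t)) := by
        simp only [hγ0def]; ring
      rw [habs, abs_neg, abs_of_nonneg hpos.le, mul_div_assoc', div_le_iff₀ hV]
      have hs : 0 ≤ Real.sinh (ω * (T - t)) := Real.sinh_nonneg_iff.2 (harg t ht)
      have hsc : Real.sinh (ω * (T - t)) ≤ Real.cosh (ω * (T - t)) :=
        (Real.sinh_lt_cosh _).le
      have key := bound_alg aB (ηB * ω) (Real.sinh (ω * (T - t)))
        (Real.cosh (ω * (T - t))) haB (mul_pos hηB hω) hs hsc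
      simp only [hUdef, hVdef, hcdef]
      calc 2 * ηB * ω * (Real.sinh (ω * (T - t))
            + aB / (ηB * ω) * Real.cosh (ω * (T - t)))
          = 2 * (ηB * ω) * (Real.sinh (ω * (T - t))
            + aB / (ηB * ω) * Real.cosh (ω * (T - t))) := by ring
        _ ≤ 2 * max aB (ηB * ω) * (Real.cosh (ω * (T - t))
            + aB / (ηB * ω) * Real.sinh (ω * (T - t))) := key
  have huniq : ∀ γ₁ γ₂ : ℝ → ℝ, IsBrokerRiccatiSol aB ηB φB T γ₁ →
      IsBrokerRiccatiSol aB ηB φB T γ₂ → ∀ t ∈ Icc (0:ℝ) T, γ₁ t = γ₂ t := by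
    intro γ₁ γ₂ h₁ h₂
    obtain ⟨hc₁, hT₁, hd₁⟩ := h₁
    obtain ⟨hc₂, hT₂, hd₂⟩ := h₂
    have hcont₁ : ContinuousOn γ₁ (Icc 0 T) := hc₁.continuousOn
    have hcont₂ : ContinuousOn γ₂ (Icc 0 T) := hc₂.continuousOn
    obtain ⟨R₁, hR₁⟩ := isCompact_Icc.exists_bound_of_continuousOn hcont₁
    obtain ⟨R₂, hR₂⟩ := isCompact_Icc.exists_bound_of_continuousOn hcont₂
    set R : ℝ := max R₁ R₂ with hRdef
    have hR0 : 0 ≤ R := le_trans (norm_nonneg (γ₁ 0))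
      (le_trans (hR₁ 0 ⟨le_refl 0, hT.le⟩) (le_max_left _ _))
    have hmem : ∀ t ∈ Icc (0:ℝ) T, γ₁ t ∈ Icc (-R) R ∧ γ₂ t ∈ Icc (-R) R := by
      intro t ht
      have h1 : |γ₁ t| ≤ R := le_trans (hR₁ t ht) (le_max_left _ _)
      have h2 : |γ₂ t| ≤ R := le_trans (hR₂ t ht) (le_max_right _ _)
      exact ⟨⟨neg_le_of_abs_le h1, le_of_abs_le h1⟩,
        ⟨neg_le_of_abs_le h2, le_of_abs_le h2⟩⟩
    set v : ℝ → ℝ → ℝ := fun _ y =>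
      2 * (φB - aB ^ 2 / ηB) + (2 * aB / ηB) * y - (1 / (2 * ηB)) * y ^ 2 with hvdef
    set K : NNReal := Real.toNNReal (2 * aB / ηB + R / ηB) with hKdef
    have hK : (K : ℝ) = 2 * aB / ηB + R / ηB :=
      Real.coe_toNNReal _ (by positivity)
    have hv : ∀ t : ℝ, LipschitzOnWith K (v t) (Icc (-R) R) := by
      intro t
      rw [lipschitzOnWith_iff_dist_le_mul]
      intro x hx y hy
      rw [Real.dist_eq, Real.dist_eq, hK]
      have hxa : |x| ≤ R := abs_le.2 ⟨hx.1, hx.2⟩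
      have hya : |y| ≤ R := abs_le.2 ⟨hy.1, hy.2⟩
      have hdiff : v t x - v t y
          = (2 * aB / ηB - (x + y) / (2 * ηB)) * (x - y) := by
        simp only [hvdef]; field_simp; ring
      rw [hdiff, abs_mul]
      apply mul_le_mul_of_nonneg_right _ (abs_nonneg _)
      calc |2 * aB / ηB - (x + y) / (2 * ηB)|
          ≤ |2 * aB / ηB| + |(x + y) / (2 * ηB)| := abs_sub _ _
        _ ≤ 2 * aB / ηB + R / ηB := by
            have h1 : |2 * aB / ηB| = 2 * aB / ηB := abs_of_nonneg (by positivity)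
            have h2 : |(x + y) / (2 * ηB)| ≤ R / ηB := by
              rw [abs_div, abs_of_nonneg (by positivity : (0:ℝ) ≤ 2 * ηB)]
              rw [div_le_div_iff₀ (by positivity) hηB]
              have h3 : |x + y| ≤ |x| + |y| := abs_add_le _ _
              nlinarith
            linarith
    have hf' : ∀ t ∈ Ioc (0:ℝ) T, HasDerivWithinAt γ₁ (v t (γ₁ t)) (Iic t) t := by
      intro t ht
      have hmemn : Icc (0:ℝ) T ∈ nhdsWithin t (Iic t) :=
        mem_nhdsWithin.2 ⟨Ioi 0, isOpen_Ioi, ht.1,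
          fun x hx => ⟨hx.1.le, hx.2.trans ht.2⟩⟩
      exact (hd₁ t ⟨ht.1.le, ht.2⟩).mono_of_mem_nhdsWithin hmemn
    have hg' : ∀ t ∈ Ioc (0:ℝ) T, HasDerivWithinAt γ₂ (v t (γ₂ t)) (Iic t) t := by
      intro t ht
      have hmemn : Icc (0:ℝ) T ∈ nhdsWithin t (Iic t) :=
        mem_nhdsWithin.2 ⟨Ioi 0, isOpen_Ioi, ht.1,
          fun x hx => ⟨hx.1.le, hx.2.trans ht.2⟩⟩
      exact (hd₂ t ⟨ht.1.le, ht.2⟩).mono_of_mem_nhdsWithin hmemn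
    have key := ODE_solution_unique_of_mem_Icc_left (fun t _ => hv t) hcont₁ hf'
      (fun t ht => (hmem t ⟨ht.1.le, ht.2⟩).1) hcont₂ hg'
      (fun t ht => (hmem t ⟨ht.1.le, ht.2⟩).2) (hT₁.trans hT₂.symm)
    exact fun t ht => key ht
  refine ⟨⟨γ0, hsol⟩, huniq, ?_⟩
  intro γ hγ
  have heq : EqOn γ γ0 (Icc 0 T) := fun t ht => huniq γ γ0 hγ hsol t ht
  refine ⟨AnalyticOn.congr (fun t ht => (hγ0an t (hVpos t ht).ne').analyticWithinAt) heq, ?_⟩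
  intro t ht
  rw [heq ht]
  exact hbound t ht
end

section
/- Let A ∈ C([0,T]³), B ∈ C([0,T]²), E ∈ C([0,T]²), F ∈ C([0,T]), and let m : [0,T] → ℝ be bounded and measurable. Then for every t ∈ [0,T]: ∫₀^t ∫_s^T A(r,s,t)·( ∫₀^r E(u,r)·m(min(u,s)) du + F(r)·m(min(r,s)) ) dr ds + ∫_t^T B(s,t)·( ∫₀^s E(u,s)·m(min(u,t)) du + F(s)·m(min(s,t)) ) ds = ∫₀^t L̂₁[E,F](s,t)·m(s) ds + L̂₂[E,F](t)·m(t). -/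
open Set MeasureTheory intervalIntegral Function
open Set MeasureTheory intervalIntegral

/-- Tietze extension from a closed set. -/
lemma exists_cont_ext {X : Type*} [TopologicalSpace X] [NormalSpace X] {s : Set X}
    (hs : IsClosed s) {f : X → ℝ} (hf : ContinuousOn f s) :
    ∃ g : X → ℝ, Continuous g ∧ ∀ x ∈ s, g x = f x := by
  obtain ⟨g, hg⟩ := ContinuousMap.exists_restrict_eq hs ⟨s.restrict f, hf.restrict⟩
  refine ⟨g, g.continuous, fun x hx => ?_⟩
  have := congrFun (congrArg DFunLike.coe hg) ⟨x, hx⟩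
  exact this

/-- continuous * (bounded measurable) is interval integrable -/
lemma II_cont_mul {g f : ℝ → ℝ} (hg : Continuous g) (hf : Measurable f) {C : ℝ}
    (hC : ∀ x, |f x| ≤ C) (a b : ℝ) :
    IntervalIntegrable (fun x => g x * f x) volume a b := by
  rw [intervalIntegrable_iff]
  have hgi : IntegrableOn g (uIoc a b) volume := (hg.intervalIntegrable a b).def'
  exact hgi.bdd_mul (hf.aestronglyMeasurable) (Filter.Eventually.of_forall fun x => by
    simpa [Real.norm_eq_abs] using hC x) |>.congr (Filter.Eventually.of_forall fun x => mul_comm _ _)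
open Set MeasureTheory intervalIntegral

lemma rect_swap (g : ℝ → ℝ → ℝ) (hg : Continuous fun p : ℝ × ℝ => g p.1 p.2)
    (m : ℝ → ℝ) (hm : Measurable m) (M : ℝ) (hM : ∀ x, |m x| ≤ M)
    {a b c d : ℝ} (hab : a ≤ b) (hcd : c ≤ d) :
    ∫ r in a..b, ∫ u in c..d, g r u * m u = ∫ u in c..d, (∫ r in a..b, g r u) * m u := by
  obtain ⟨C, hC⟩ := (isCompact_Icc.prod isCompact_Icc :
      IsCompact (Icc a b ×ˢ Icc c d)).exists_bound_of_continuousOn hg.continuousOn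
  have hMnn : 0 ≤ M := (abs_nonneg _).trans (hM 0)
  have hint : Integrable (fun p : ℝ × ℝ => g p.1 p.2 * m p.2)
      ((volume.restrict (Ioc a b)).prod (volume.restrict (Ioc c d))) := by
    apply Integrable.mono' (integrable_const (C * M))
    · exact (hg.measurable.mul (hm.comp measurable_snd)).aestronglyMeasurable
    · rw [Measure.prod_restrict, ae_restrict_iff' (measurableSet_Ioc.prod measurableSet_Ioc)]
      refine Filter.Eventually.of_forall fun p hp => ?_
      rcases hp with ⟨hp1, hp2⟩
      have h1 : ‖g p.1 p.2‖ ≤ C := hC _ ⟨Ioc_subset_Icc_self hp1, Ioc_subset_Icc_self hp2⟩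
      calc ‖g p.1 p.2 * m p.2‖ = ‖g p.1 p.2‖ * |m p.2| := by
            simp [Real.norm_eq_abs, abs_mul]
        _ ≤ C * M := mul_le_mul h1 (hM _) (abs_nonneg _) ((norm_nonneg _).trans h1)
  calc ∫ r in a..b, ∫ u in c..d, g r u * m u
      = ∫ r in Ioc a b, ∫ u in Ioc c d, g r u * m u := by
        rw [integral_of_le hab]
        refine setIntegral_congr_fun measurableSet_Ioc fun r _ => ?_
        rw [integral_of_le hcd]
    _ = ∫ u in Ioc c d, ∫ r in Ioc a b, g r u * m u := integral_integral_swap hint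
    _ = ∫ u in c..d, (∫ r in a..b, g r u) * m u := by
        rw [integral_of_le hcd]
        refine setIntegral_congr_fun measurableSet_Ioc fun u _ => ?_
        rw [integral_of_le hab]; exact integral_mul_const _ _
open Set MeasureTheory intervalIntegral Function

lemma tri_aux (g : ℝ → ℝ → ℝ) (hg : Continuous fun p : ℝ × ℝ => g p.1 p.2)
    (m : ℝ → ℝ) (hm : Measurable m) (M : ℝ) (hM : ∀ x, |m x| ≤ M)
    {t : ℝ} (ht : 0 ≤ t) :
    IntervalIntegrable (fun s => ∫ u in (0:ℝ)..s, g s u * m u) volume 0 t ∧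
    ∫ s in (0:ℝ)..t, ∫ u in (0:ℝ)..s, g s u * m u
      = ∫ u in (0:ℝ)..t, (∫ s in u..t, g s u) * m u := by
  obtain ⟨C, hC⟩ := (isCompact_Icc.prod isCompact_Icc :
      IsCompact (Icc 0 t ×ˢ Icc 0 t)).exists_bound_of_continuousOn hg.continuousOn
  have hMnn : 0 ≤ M := (abs_nonneg _).trans (hM 0)
  have hCnn : 0 ≤ C := (norm_nonneg _).trans
    (hC (0, 0) ⟨⟨le_refl _, ht⟩, ⟨le_refl _, ht⟩⟩)
  -- the indicator-type function on the product
  set f : ℝ → ℝ → ℝ := fun s u => if u ≤ s then g s u * m u else 0 with hf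
  have hfm : Measurable (uncurry f) := by
    apply Measurable.ite (measurableSet_le measurable_snd measurable_fst)
    · exact hg.measurable.mul (hm.comp measurable_snd)
    · exact measurable_const
  have hbd : ∀ s u, s ∈ Ioc (0:ℝ) t → u ∈ Ioc (0:ℝ) t → ‖f s u‖ ≤ C * M := by
    intro s u hs hu
    rw [hf]
    dsimp only
    split_ifs with h
    · have h1 : ‖g s u‖ ≤ C := hC (s, u) ⟨Ioc_subset_Icc_self hs, Ioc_subset_Icc_self hu⟩
      calc ‖g s u * m u‖ = ‖g s u‖ * |m u| := by simp [Real.norm_eq_abs, abs_mul]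
        _ ≤ C * M := mul_le_mul h1 (hM _) (abs_nonneg _) hCnn
    · simpa using mul_nonneg hCnn hMnn
  have hint : Integrable (uncurry f)
      ((volume.restrict (Ioc (0:ℝ) t)).prod (volume.restrict (Ioc (0:ℝ) t))) := by
    apply Integrable.mono' (integrable_const (C * M)) hfm.aestronglyMeasurable
    rw [Measure.prod_restrict, ae_restrict_iff' (measurableSet_Ioc.prod measurableSet_Ioc)]
    exact Filter.Eventually.of_forall fun p hp => hbd p.1 p.2 hp.1 hp.2
  -- inner integral identity: for s ∈ Ioc 0 t
  have hinner : ∀ s ∈ Ioc (0:ℝ) t,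
      (∫ u in (0:ℝ)..s, g s u * m u) = ∫ u in Ioc (0:ℝ) t, f s u := by
    intro s hs
    have h1 : (fun u => f s u) = indicator (Iic s) (fun u => g s u * m u) := by
      funext u; simp [hf, indicator_apply, mem_Iic]
    rw [h1, setIntegral_indicator measurableSet_Iic,
      integral_of_le hs.1.le]
    congr 1
    rw [Ioc_inter_Iic, min_eq_right hs.2]
  -- the measurable version of the inner function
  have hmeas : StronglyMeasurable (fun s => ∫ u in Ioc (0:ℝ) t, f s u) :=
    (hfm.stronglyMeasurable).integral_prod_right
  have hKbd : ∀ s ∈ Ioc (0:ℝ) t, ‖∫ u in Ioc (0:ℝ) t, f s u‖ ≤ C * M * t := by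
    intro s hs
    have := norm_setIntegral_le_of_norm_le_const (C := C * M)
      (measure_Ioc_lt_top : volume (Ioc (0:ℝ) t) < ⊤) (fun u hu => hbd s u hs hu)
    simpa [Real.volume_Ioc, ENNReal.toReal_ofReal ht, max_eq_left ht] using this
  have hII : IntervalIntegrable (fun s => ∫ u in (0:ℝ)..s, g s u * m u) volume 0 t := by
    rw [intervalIntegrable_iff, uIoc_of_le ht]
    have h2 : IntegrableOn (fun s => ∫ u in Ioc (0:ℝ) t, f s u) (Ioc 0 t) volume := by
      apply Integrable.mono' (integrable_const (C * M * t)) hmeas.aestronglyMeasurable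
      rw [ae_restrict_iff' measurableSet_Ioc]
      exact Filter.Eventually.of_forall fun s hs => hKbd s hs
    exact h2.congr_fun (fun s hs => (hinner s hs).symm) measurableSet_Ioc
  refine ⟨hII, ?_⟩
  calc ∫ s in (0:ℝ)..t, ∫ u in (0:ℝ)..s, g s u * m u
      = ∫ s in Ioc (0:ℝ) t, ∫ u in Ioc (0:ℝ) t, f s u := by
        rw [integral_of_le ht]
        exact setIntegral_congr_fun measurableSet_Ioc hinner
    _ = ∫ u in Ioc (0:ℝ) t, ∫ s in Ioc (0:ℝ) t, f s u := integral_integral_swap hint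
    _ = ∫ u in (0:ℝ)..t, (∫ s in u..t, g s u) * m u := by
        rw [integral_of_le ht]
        refine setIntegral_congr_fun measurableSet_Ioc fun u hu => ?_
        have h1 : (fun s => f s u) = indicator (Ici u) (fun s => g s u * m u) := by
          funext s; simp [hf, indicator_apply, mem_Ici]
        rw [h1, setIntegral_indicator measurableSet_Ici]
        have h2 : Ioc (0:ℝ) t ∩ Ici u = Icc u t := by
          ext x; simp only [mem_inter_iff, mem_Ioc, mem_Ici, mem_Icc]
          constructor
          · rintro ⟨⟨_, hxt⟩, hux⟩; exact ⟨hux, hxt⟩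
          · rintro ⟨hux, hxt⟩; exact ⟨⟨lt_of_lt_of_le hu.1 hux, hxt⟩, hux⟩
        rw [h2, integral_Icc_eq_integral_Ioc, integral_of_le hu.2]
        exact integral_mul_const _ _
open Set MeasureTheory intervalIntegral Function

lemma cont_param_II {X : Type*} [TopologicalSpace X] (f : X → ℝ → ℝ)
    (hf : Continuous (uncurry f)) {a b : X → ℝ} (ha : Continuous a) (hb : Continuous b) :
    Continuous fun x => ∫ r in a x..b x, f x r := by
  have hint : ∀ x u v, IntervalIntegrable (f x) volume u v := fun x u v =>
    ((hf.comp (continuous_const.prodMk continuous_id)).intervalIntegrable u v)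
  have heq : (fun x => ∫ r in a x..b x, f x r)
      = fun x => (∫ r in (0:ℝ)..b x, f x r) - ∫ r in (0:ℝ)..a x, f x r := by
    funext x
    rw [integral_interval_sub_left (hint x 0 (b x)) (hint x 0 (a x))]
  rw [heq]
  exact (continuous_parametric_intervalIntegral_of_continuous hf hb).sub
    (continuous_parametric_intervalIntegral_of_continuous hf ha)

lemma II_meas_bdd {f : ℝ → ℝ} (hf : Measurable f) {C a b : ℝ}
    (h : ∀ x ∈ uIoc a b, |f x| ≤ C) : IntervalIntegrable f volume a b := by
  rw [intervalIntegrable_iff]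
  haveI : IsFiniteMeasure (volume.restrict (uIoc a b)) := by
    constructor
    rw [Measure.restrict_apply_univ, uIoc]
    exact measure_Ioc_lt_top
  apply Integrable.mono' (integrable_const C) hf.aestronglyMeasurable
  rw [ae_restrict_iff' measurableSet_uIoc]
  exact Filter.Eventually.of_forall fun x hx => by simpa [Real.norm_eq_abs] using h x hx

lemma meas_param (f : ℝ → ℝ → ℝ) (hf : Measurable (uncurry f)) (S : Set ℝ) :
    StronglyMeasurable fun r => ∫ u in S, f r u :=
  hf.stronglyMeasurable.integral_prod_right

theorem key (T : ℝ) (hT : 0 ≤ T)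
    (A : ℝ → ℝ → ℝ → ℝ) (B : ℝ → ℝ → ℝ) (E : ℝ → ℝ → ℝ) (F : ℝ → ℝ)
    (hA : Continuous fun p : ℝ × ℝ × ℝ => A p.1 p.2.1 p.2.2)
    (hB : Continuous fun p : ℝ × ℝ => B p.1 p.2)
    (hE : Continuous fun p : ℝ × ℝ => E p.1 p.2)
    (hF : Continuous F)
    (m : ℝ → ℝ) (hm : Measurable m) (M : ℝ) (hM : ∀ x, |m x| ≤ M)
    (t : ℝ) (ht0 : 0 ≤ t) (htT : t ≤ T) :
    (∫ s in (0 : ℝ)..t, ∫ r in s..T,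
        A r s t * ((∫ u in (0 : ℝ)..r, E u r * m (min u s)) + F r * m (min r s))) +
      (∫ s in t..T,
        B s t * ((∫ u in (0 : ℝ)..s, E u s * m (min u t)) + F s * m (min s t))) =
    (∫ s in (0 : ℝ)..t,
        ((∫ u in s..t, ∫ r in u..T, A r u t * E s r) +
          (∫ r in s..T, A r s t * ((∫ u in s..r, E u r) + F r)) +
          ∫ u in t..T, B u t * E s u) * m s) +
      (∫ s in t..T, B s t * ((∫ u in t..s, E u s) + F s)) * m t := by
  have hMnn : 0 ≤ M := (abs_nonneg _).trans (hM 0)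
  -- global bounds for E and B on the square
  obtain ⟨CE, hCE⟩ := (isCompact_Icc.prod isCompact_Icc :
      IsCompact (Icc 0 T ×ˢ Icc 0 T)).exists_bound_of_continuousOn hE.continuousOn
  have hCEnn : 0 ≤ CE := (norm_nonneg _).trans (hCE (0, 0) ⟨⟨le_refl _, hT⟩, ⟨le_refl _, hT⟩⟩)
  obtain ⟨CA, hCA⟩ := (isCompact_Icc.prod isCompact_Icc :
      IsCompact (Icc 0 T ×ˢ Icc 0 T)).exists_bound_of_continuousOn
      ((hA.comp (by fun_prop : Continuous fun p : ℝ × ℝ => (p.1, p.2, t))).continuousOn)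
  obtain ⟨CB, hCB⟩ := (isCompact_Icc.prod isCompact_Icc :
      IsCompact (Icc 0 T ×ˢ Icc 0 T)).exists_bound_of_continuousOn hB.continuousOn
  -- continuity facts
  have cEin : Continuous fun q : ℝ × ℝ => ∫ u in q.1..q.2, E u q.2 := by
    apply cont_param_II (f := fun q u => E u q.2) _ continuous_fst continuous_snd
    have : Continuous (uncurry fun (q : ℝ × ℝ) (u : ℝ) => E u q.2) := by fun_prop
    exact this
  have c1 : Continuous fun p : ℝ × ℝ => ∫ r in p.1..T, A r p.1 t * E p.2 r := by
    apply cont_param_II (f := fun p r => A r p.1 t * E p.2 r) _ continuous_fst continuous_const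
    have : Continuous (uncurry fun (p : ℝ × ℝ) (r : ℝ) => A r p.1 t * E p.2 r) := by fun_prop
    exact this
  have c2 : Continuous fun s : ℝ => ∫ r in s..T, A r s t * ((∫ u in s..r, E u r) + F r) := by
    apply cont_param_II (f := fun s r => A r s t * ((∫ u in s..r, E u r) + F r)) _
      continuous_id continuous_const
    have : Continuous (uncurry fun (s r : ℝ) => A r s t * ((∫ u in s..r, E u r) + F r)) := by
      have h2 : Continuous fun q : ℝ × ℝ => ∫ u in q.1..q.2, E u q.2 := cEin
      fun_prop
    exact this
  have c3 : Continuous fun s : ℝ => B s t * ((∫ u in t..s, E u s) + F s) := by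
    have h2 : Continuous fun q : ℝ × ℝ => ∫ u in q.1..q.2, E u q.2 := cEin
    fun_prop
  have cH : Continuous fun q : ℝ × ℝ => ∫ r in q.2..T, A r q.2 t * E q.1 r := by
    apply cont_param_II (f := fun q r => A r q.2 t * E q.1 r) _ continuous_snd continuous_const
    have : Continuous (uncurry fun (q : ℝ × ℝ) (r : ℝ) => A r q.2 t * E q.1 r) := by fun_prop
    exact this
  have c4 : Continuous fun s : ℝ => ∫ u in s..t, ∫ r in u..T, A r u t * E s r := by
    apply cont_param_II (f := fun s u => ∫ r in u..T, A r u t * E s r) _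
      continuous_id continuous_const
    have : Continuous (uncurry fun (s u : ℝ) => ∫ r in u..T, A r u t * E s r) := by
      have := cH; fun_prop
    exact this
  have c5 : Continuous fun s : ℝ => ∫ u in t..T, B u t * E s u := by
    apply cont_param_II (f := fun s u => B u t * E s u) _ continuous_const continuous_const
    have : Continuous (uncurry fun (s u : ℝ) => B u t * E s u) := by fun_prop
    exact this
  ------------------------------------------------------------------
  -- STEP 1 : rewrite the first term
  ------------------------------------------------------------------
  have step1 : ∀ s, 0 ≤ s → s ≤ t →
      (∫ r in s..T, A r s t * ((∫ u in (0:ℝ)..r, E u r * m (min u s)) + F r * m (min r s)))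
      = (∫ u in (0:ℝ)..s, (∫ r in s..T, A r s t * E u r) * m u) +
        (∫ r in s..T, A r s t * ((∫ u in s..r, E u r) + F r)) * m s := by
    intro s hs0 hst
    have hsT : s ≤ T := hst.trans htT
    have hmins : Measurable fun u => m (min u s) := hm.comp (measurable_id.min measurable_const)
    have hIEm : ∀ r a b, IntervalIntegrable (fun u => E u r * m (min u s)) volume a b := by
      intro r a b
      exact II_cont_mul (by fun_prop) hmins (fun x => hM _) a b
    have hcongr : EqOn
        (fun r => A r s t * ((∫ u in (0:ℝ)..r, E u r * m (min u s)) + F r * m (min r s)))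
        (fun r => A r s t * (∫ u in (0:ℝ)..s, E u r * m u) +
          (A r s t * ((∫ u in s..r, E u r) + F r)) * m s) (uIcc s T) := by
      intro r hr
      rw [uIcc_of_le hsT] at hr
      have h1 : (∫ u in (0:ℝ)..r, E u r * m (min u s))
          = (∫ u in (0:ℝ)..s, E u r * m u) + (∫ u in s..r, E u r) * m s := by
        calc ∫ u in (0:ℝ)..r, E u r * m (min u s)
            = (∫ u in (0:ℝ)..s, E u r * m (min u s)) + ∫ u in s..r, E u r * m (min u s) :=
              (integral_add_adjacent_intervals (hIEm r 0 s) (hIEm r s r)).symm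
          _ = (∫ u in (0:ℝ)..s, E u r * m u) + (∫ u in s..r, E u r) * m s := by
              congr 1
              · apply integral_congr; intro u hu
                rw [uIcc_of_le hs0] at hu
                show E u r * m (min u s) = E u r * m u
                rw [min_eq_left hu.2]
              · rw [← intervalIntegral.integral_mul_const]
                apply integral_congr; intro u hu
                rw [uIcc_of_le hr.1] at hu
                show E u r * m (min u s) = E u r * m s
                rw [min_eq_right hu.1]
      have h2 : m (min r s) = m s := by rw [min_eq_right hr.1]
      dsimp only
      rw [h1, h2]; ring
    rw [integral_congr hcongr]
    have hphi : ∀ r, (∫ u in (0:ℝ)..s, E u r * m u)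
        = ∫ u in Ioc (0:ℝ) s, E u r * m u := fun r => integral_of_le hs0
    have int1 : IntervalIntegrable
        (fun r => A r s t * (∫ u in (0:ℝ)..s, E u r * m u)) volume s T := by
      simp only [hphi]
      refine II_meas_bdd (C := CA * (CE * M * T)) ?_ ?_
      · apply Measurable.mul
        · exact (hA.comp (by fun_prop : Continuous fun r : ℝ => (r, s, t))).measurable
        · exact (meas_param (fun r u => E u r * m u)
            (by exact ((hE.comp (by fun_prop : Continuous fun p : ℝ × ℝ =>
              (p.2, p.1))).measurable).mul (hm.comp measurable_snd)) (Ioc 0 s)).measurable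
      · intro r hr
        rw [uIoc_of_le hsT] at hr
        have hrIcc : r ∈ Icc (0:ℝ) T := ⟨hs0.trans hr.1.le, hr.2⟩
        have hb1 : ‖∫ u in Ioc (0:ℝ) s, E u r * m u‖ ≤ CE * M * s := by
          have := norm_setIntegral_le_of_norm_le_const (C := CE * M)
            (measure_Ioc_lt_top : volume (Ioc (0:ℝ) s) < ⊤)
            (fun u hu => by
              have huIcc : u ∈ Icc (0:ℝ) T := ⟨hu.1.le, (hu.2.trans hst).trans htT⟩
              calc ‖E u r * m u‖ = ‖E u r‖ * |m u| := by simp [Real.norm_eq_abs, abs_mul]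
                _ ≤ CE * M := mul_le_mul (hCE (u, r) ⟨huIcc, hrIcc⟩) (hM _)
                    (abs_nonneg _) hCEnn)
          simpa [Real.volume_Ioc, ENNReal.toReal_ofReal hs0, max_eq_left hs0] using this
        have hb2 : ‖A r s t‖ ≤ CA := hCA (r, s) ⟨hrIcc, ⟨hs0, hsT⟩⟩
        calc |A r s t * (∫ u in Ioc (0:ℝ) s, E u r * m u)|
            = ‖A r s t‖ * ‖∫ u in Ioc (0:ℝ) s, E u r * m u‖ := by
              simp [Real.norm_eq_abs, abs_mul]
          _ ≤ CA * (CE * M * T) := by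
              apply mul_le_mul hb2 (hb1.trans ?_) (norm_nonneg _)
                ((norm_nonneg _).trans hb2)
              exact mul_le_mul_of_nonneg_left hsT (mul_nonneg hCEnn hMnn)
    have int2 : IntervalIntegrable
        (fun r => (A r s t * ((∫ u in s..r, E u r) + F r)) * m s) volume s T := by
      apply Continuous.intervalIntegrable
      have h2 : Continuous fun q : ℝ × ℝ => ∫ u in q.1..q.2, E u q.2 := cEin
      fun_prop
    rw [integral_add int1 int2, intervalIntegral.integral_mul_const]
    congr 1
    calc ∫ r in s..T, A r s t * (∫ u in (0:ℝ)..s, E u r * m u)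
        = ∫ r in s..T, ∫ u in (0:ℝ)..s, (A r s t * E u r) * m u := by
          apply integral_congr; intro r _; dsimp only
          rw [← intervalIntegral.integral_const_mul]
          apply integral_congr; intro u _; dsimp only; ring
      _ = ∫ u in (0:ℝ)..s, (∫ r in s..T, A r s t * E u r) * m u :=
          rect_swap (fun r u => A r s t * E u r) (by fun_prop) m hm M hM hsT hs0
  ------------------------------------------------------------------
  -- STEP 2 : rewrite the second term
  ------------------------------------------------------------------
  have step2 :
      (∫ s in t..T, B s t * ((∫ u in (0:ℝ)..s, E u s * m (min u t)) + F s * m (min s t)))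
      = (∫ u in (0:ℝ)..t, (∫ s in t..T, B s t * E u s) * m u) +
        (∫ s in t..T, B s t * ((∫ u in t..s, E u s) + F s)) * m t := by
    have hmint : Measurable fun u => m (min u t) := hm.comp (measurable_id.min measurable_const)
    have hIEm : ∀ s a b, IntervalIntegrable (fun u => E u s * m (min u t)) volume a b := by
      intro s a b
      exact II_cont_mul (by fun_prop) hmint (fun x => hM _) a b
    have hcongr : EqOn
        (fun s => B s t * ((∫ u in (0:ℝ)..s, E u s * m (min u t)) + F s * m (min s t)))
        (fun s => B s t * (∫ u in (0:ℝ)..t, E u s * m u) +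
          (B s t * ((∫ u in t..s, E u s) + F s)) * m t) (uIcc t T) := by
      intro s hs
      rw [uIcc_of_le htT] at hs
      have h1 : (∫ u in (0:ℝ)..s, E u s * m (min u t))
          = (∫ u in (0:ℝ)..t, E u s * m u) + (∫ u in t..s, E u s) * m t := by
        calc ∫ u in (0:ℝ)..s, E u s * m (min u t)
            = (∫ u in (0:ℝ)..t, E u s * m (min u t)) + ∫ u in t..s, E u s * m (min u t) :=
              (integral_add_adjacent_intervals (hIEm s 0 t) (hIEm s t s)).symm
          _ = (∫ u in (0:ℝ)..t, E u s * m u) + (∫ u in t..s, E u s) * m t := by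
              congr 1
              · apply integral_congr; intro u hu
                rw [uIcc_of_le ht0] at hu
                show E u s * m (min u t) = E u s * m u
                rw [min_eq_left hu.2]
              · rw [← intervalIntegral.integral_mul_const]
                apply integral_congr; intro u hu
                rw [uIcc_of_le hs.1] at hu
                show E u s * m (min u t) = E u s * m t
                rw [min_eq_right hu.1]
      have h2 : m (min s t) = m t := by rw [min_eq_right hs.1]
      dsimp only
      rw [h1, h2]; ring
    rw [integral_congr hcongr]
    have hphi : ∀ s, (∫ u in (0:ℝ)..t, E u s * m u)
        = ∫ u in Ioc (0:ℝ) t, E u s * m u := fun s => integral_of_le ht0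
    have int3 : IntervalIntegrable
        (fun s => B s t * (∫ u in (0:ℝ)..t, E u s * m u)) volume t T := by
      simp only [hphi]
      refine II_meas_bdd (C := CB * (CE * M * T)) ?_ ?_
      · apply Measurable.mul
        · exact (hB.comp (by fun_prop : Continuous fun s : ℝ => (s, t))).measurable
        · exact (meas_param (fun s u => E u s * m u)
            (by exact ((hE.comp (by fun_prop : Continuous fun p : ℝ × ℝ =>
              (p.2, p.1))).measurable).mul (hm.comp measurable_snd)) (Ioc 0 t)).measurable
      · intro s hs
        rw [uIoc_of_le htT] at hs
        have hsIcc : s ∈ Icc (0:ℝ) T := ⟨ht0.trans hs.1.le, hs.2⟩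
        have hb1 : ‖∫ u in Ioc (0:ℝ) t, E u s * m u‖ ≤ CE * M * t := by
          have := norm_setIntegral_le_of_norm_le_const (C := CE * M)
            (measure_Ioc_lt_top : volume (Ioc (0:ℝ) t) < ⊤)
            (fun u hu => by
              have huIcc : u ∈ Icc (0:ℝ) T := ⟨hu.1.le, hu.2.trans htT⟩
              calc ‖E u s * m u‖ = ‖E u s‖ * |m u| := by simp [Real.norm_eq_abs, abs_mul]
                _ ≤ CE * M := mul_le_mul (hCE (u, s) ⟨huIcc, hsIcc⟩) (hM _)
                    (abs_nonneg _) hCEnn)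
          simpa [Real.volume_Ioc, ENNReal.toReal_ofReal ht0, max_eq_left ht0] using this
        have hb2 : ‖B s t‖ ≤ CB := hCB (s, t) ⟨hsIcc, ⟨ht0, htT⟩⟩
        calc |B s t * (∫ u in Ioc (0:ℝ) t, E u s * m u)|
            = ‖B s t‖ * ‖∫ u in Ioc (0:ℝ) t, E u s * m u‖ := by
              simp [Real.norm_eq_abs, abs_mul]
          _ ≤ CB * (CE * M * T) := by
              apply mul_le_mul hb2 (hb1.trans ?_) (norm_nonneg _)
                ((norm_nonneg _).trans hb2)
              exact mul_le_mul_of_nonneg_left htT (mul_nonneg hCEnn hMnn)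
    have int4 : IntervalIntegrable
        (fun s => (B s t * ((∫ u in t..s, E u s) + F s)) * m t) volume t T :=
      (c3.mul continuous_const).intervalIntegrable t T
    rw [integral_add int3 int4, intervalIntegral.integral_mul_const]
    congr 1
    calc ∫ s in t..T, B s t * (∫ u in (0:ℝ)..t, E u s * m u)
        = ∫ s in t..T, ∫ u in (0:ℝ)..t, (B s t * E u s) * m u := by
          apply integral_congr; intro s _; dsimp only
          rw [← intervalIntegral.integral_const_mul]
          apply integral_congr; intro u _; dsimp only; ring
      _ = ∫ u in (0:ℝ)..t, (∫ s in t..T, B s t * E u s) * m u :=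
          rect_swap (fun s u => B s t * E u s) (by fun_prop) m hm M hM htT ht0
  ------------------------------------------------------------------
  -- Combine
  ------------------------------------------------------------------
  have hstep1' : EqOn
      (fun s => ∫ r in s..T,
        A r s t * ((∫ u in (0:ℝ)..r, E u r * m (min u s)) + F r * m (min r s)))
      (fun s => (∫ u in (0:ℝ)..s, (∫ r in s..T, A r s t * E u r) * m u) +
        (∫ r in s..T, A r s t * ((∫ u in s..r, E u r) + F r)) * m s) (uIcc 0 t) := by
    intro s hs
    rw [uIcc_of_le ht0] at hs
    exact step1 s hs.1 hs.2
  rw [integral_congr hstep1', step2]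
  obtain ⟨hKint, hKswap⟩ := tri_aux (fun s u => ∫ r in s..T, A r s t * E u r) c1 m hm M hM ht0
  rw [integral_add hKint (II_cont_mul c2 hm hM 0 t), hKswap]
  have hsplit : (∫ s in (0:ℝ)..t,
      ((∫ u in s..t, ∫ r in u..T, A r u t * E s r) +
        (∫ r in s..T, A r s t * ((∫ u in s..r, E u r) + F r)) +
        ∫ u in t..T, B u t * E s u) * m s)
      = (∫ s in (0:ℝ)..t, (∫ u in s..t, ∫ r in u..T, A r u t * E s r) * m s) +
        (∫ s in (0:ℝ)..t, (∫ r in s..T, A r s t * ((∫ u in s..r, E u r) + F r)) * m s) +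
        ∫ s in (0:ℝ)..t, (∫ u in t..T, B u t * E s u) * m s := by
    have i1 := II_cont_mul c4 hm hM 0 t
    have i2 := II_cont_mul c2 hm hM 0 t
    have i3 := II_cont_mul c5 hm hM 0 t
    rw [← integral_add i1 i2, ← integral_add (i1.add i2) i3]
    apply integral_congr; intro s _; dsimp only; ring
  rw [hsplit]
  ring



open Set

/-- First component of the operator `L̂` associated with kernels `A`, `B` and horizon `T`. -/
noncomputable def Lhat1 (A : ℝ → ℝ → ℝ → ℝ) (B : ℝ → ℝ → ℝ) (T : ℝ)
    (E : ℝ → ℝ → ℝ) (F : ℝ → ℝ) (s t : ℝ) : ℝ :=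
  (∫ u in s..t, ∫ r in u..T, A r u t * E s r) +
    (∫ r in s..T, A r s t * ((∫ u in s..r, E u r) + F r)) +
    ∫ u in t..T, B u t * E s u

/-- Second component of the operator `L̂` associated with kernels `A`, `B` and horizon `T`. -/
noncomputable def Lhat2 (B : ℝ → ℝ → ℝ) (T : ℝ)
    (E : ℝ → ℝ → ℝ) (F : ℝ → ℝ) (t : ℝ) : ℝ :=
  ∫ s in t..T, B s t * ((∫ u in t..s, E u s) + F s)

theorem Lhat_composition_identity
    (T : ℝ) (hT : 0 < T)
    (A : ℝ → ℝ → ℝ → ℝ) (B : ℝ → ℝ → ℝ) (E : ℝ → ℝ → ℝ) (F : ℝ → ℝ)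
    (hA : ContinuousOn (fun p : ℝ × ℝ × ℝ => A p.1 p.2.1 p.2.2)
      (Icc 0 T ×ˢ Icc 0 T ×ˢ Icc 0 T))
    (hB : ContinuousOn (fun p : ℝ × ℝ => B p.1 p.2) (Icc 0 T ×ˢ Icc 0 T))
    (hE : ContinuousOn (fun p : ℝ × ℝ => E p.1 p.2) (Icc 0 T ×ˢ Icc 0 T))
    (hF : ContinuousOn F (Icc 0 T))
    (m : ℝ → ℝ) (hm : Measurable m) (M : ℝ) (hM : ∀ t ∈ Icc (0 : ℝ) T, |m t| ≤ M) :
    ∀ t ∈ Icc (0 : ℝ) T,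
      (∫ s in (0 : ℝ)..t, ∫ r in s..T,
          A r s t * ((∫ u in (0 : ℝ)..r, E u r * m (min u s)) + F r * m (min r s))) +
        (∫ s in t..T,
          B s t * ((∫ u in (0 : ℝ)..s, E u s * m (min u t)) + F s * m (min s t))) =
      (∫ s in (0 : ℝ)..t, Lhat1 A B T E F s t * m s) + Lhat2 B T E F t * m t := by
  intro t ht
  obtain ⟨ht0, htT⟩ := ht
  obtain ⟨gA, hgA, hgAeq⟩ :=
    exists_cont_ext (isClosed_Icc.prod (isClosed_Icc.prod isClosed_Icc)) hA
  obtain ⟨gB, hgB, hgBeq⟩ := exists_cont_ext (isClosed_Icc.prod isClosed_Icc) hB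
  obtain ⟨gE, hgE, hgEeq⟩ := exists_cont_ext (isClosed_Icc.prod isClosed_Icc) hE
  obtain ⟨gF, hgF, hgFeq⟩ := exists_cont_ext isClosed_Icc hF
  set A' : ℝ → ℝ → ℝ → ℝ := fun r s u => gA (r, s, u) with hA'def
  set B' : ℝ → ℝ → ℝ := fun r s => gB (r, s) with hB'def
  set E' : ℝ → ℝ → ℝ := fun u r => gE (u, r) with hE'def
  set m' : ℝ → ℝ := fun x => if x ∈ Icc (0:ℝ) T then m x else 0 with hm'def
  have hm'meas : Measurable m' := Measurable.ite measurableSet_Icc hm measurable_const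
  have hM' : ∀ x, |m' x| ≤ max M 0 := by
    intro x
    by_cases h : x ∈ Icc (0:ℝ) T
    · simp only [hm'def, if_pos h]; exact (hM x h).trans (le_max_left _ _)
    · simp only [hm'def, if_neg h]; simp
  have htIcc : t ∈ Icc (0:ℝ) T := ⟨ht0, htT⟩
  have hAe : ∀ {r s u : ℝ}, r ∈ Icc (0:ℝ) T → s ∈ Icc (0:ℝ) T → u ∈ Icc (0:ℝ) T →
      A' r s u = A r s u := fun hr hs hu => hgAeq _ ⟨hr, hs, hu⟩
  have hBe : ∀ {r s : ℝ}, r ∈ Icc (0:ℝ) T → s ∈ Icc (0:ℝ) T → B' r s = B r s :=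
    fun hr hs => hgBeq _ ⟨hr, hs⟩
  have hEe : ∀ {u r : ℝ}, u ∈ Icc (0:ℝ) T → r ∈ Icc (0:ℝ) T → E' u r = E u r :=
    fun hu hr => hgEeq _ ⟨hu, hr⟩
  have hFe : ∀ {r : ℝ}, r ∈ Icc (0:ℝ) T → gF r = F r := fun hr => hgFeq _ hr
  have hme : ∀ {x : ℝ}, x ∈ Icc (0:ℝ) T → m' x = m x := fun hx => if_pos hx
  have hA'c : Continuous fun p : ℝ × ℝ × ℝ => A' p.1 p.2.1 p.2.2 := by
    simp only [hA'def]; fun_prop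
  have hB'c : Continuous fun p : ℝ × ℝ => B' p.1 p.2 := by simp only [hB'def]; fun_prop
  have hE'c : Continuous fun p : ℝ × ℝ => E' p.1 p.2 := by simp only [hE'def]; fun_prop
  have hkey := key T hT.le A' B' E' gF hA'c hB'c hE'c hgF m' hm'meas (max M 0) hM' t ht0 htT
  -- transfer term 1
  have e1 : (∫ s in (0 : ℝ)..t, ∫ r in s..T,
        A r s t * ((∫ u in (0 : ℝ)..r, E u r * m (min u s)) + F r * m (min r s)))
      = ∫ s in (0 : ℝ)..t, ∫ r in s..T,
        A' r s t * ((∫ u in (0 : ℝ)..r, E' u r * m' (min u s)) + gF r * m' (min r s)) := by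
    apply intervalIntegral.integral_congr
    intro s hs
    rw [uIcc_of_le ht0] at hs
    have hsIcc : s ∈ Icc (0:ℝ) T := ⟨hs.1, hs.2.trans htT⟩
    dsimp only
    apply intervalIntegral.integral_congr
    intro r hr
    rw [uIcc_of_le hsIcc.2] at hr
    have hrIcc : r ∈ Icc (0:ℝ) T := ⟨hsIcc.1.trans hr.1, hr.2⟩
    have hmin1 : min r s ∈ Icc (0:ℝ) T := ⟨le_min hrIcc.1 hsIcc.1, min_le_of_right_le hsIcc.2⟩
    have hin : (∫ u in (0:ℝ)..r, E' u r * m' (min u s))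
        = ∫ u in (0:ℝ)..r, E u r * m (min u s) := by
      apply intervalIntegral.integral_congr
      intro u hu
      rw [uIcc_of_le hrIcc.1] at hu
      have huIcc : u ∈ Icc (0:ℝ) T := ⟨hu.1, hu.2.trans hrIcc.2⟩
      have hmin2 : min u s ∈ Icc (0:ℝ) T := ⟨le_min huIcc.1 hsIcc.1, min_le_of_left_le huIcc.2⟩
      show E' u r * m' (min u s) = E u r * m (min u s)
      rw [hEe huIcc hrIcc, hme hmin2]
    show A r s t * ((∫ u in (0:ℝ)..r, E u r * m (min u s)) + F r * m (min r s))
        = A' r s t * ((∫ u in (0:ℝ)..r, E' u r * m' (min u s)) + gF r * m' (min r s))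
    rw [hAe hrIcc hsIcc htIcc, hin, hFe hrIcc, hme hmin1]
  -- transfer term 2
  have e2 : (∫ s in t..T,
        B s t * ((∫ u in (0 : ℝ)..s, E u s * m (min u t)) + F s * m (min s t)))
      = ∫ s in t..T,
        B' s t * ((∫ u in (0 : ℝ)..s, E' u s * m' (min u t)) + gF s * m' (min s t)) := by
    apply intervalIntegral.integral_congr
    intro s hs
    rw [uIcc_of_le htT] at hs
    have hsIcc : s ∈ Icc (0:ℝ) T := ⟨ht0.trans hs.1, hs.2⟩
    have hmin1 : min s t ∈ Icc (0:ℝ) T := ⟨le_min hsIcc.1 ht0, min_le_of_right_le htT⟩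
    have hin : (∫ u in (0:ℝ)..s, E' u s * m' (min u t))
        = ∫ u in (0:ℝ)..s, E u s * m (min u t) := by
      apply intervalIntegral.integral_congr
      intro u hu
      rw [uIcc_of_le hsIcc.1] at hu
      have huIcc : u ∈ Icc (0:ℝ) T := ⟨hu.1, hu.2.trans hsIcc.2⟩
      have hmin2 : min u t ∈ Icc (0:ℝ) T := ⟨le_min huIcc.1 ht0, min_le_of_left_le huIcc.2⟩
      show E' u s * m' (min u t) = E u s * m (min u t)
      rw [hEe huIcc hsIcc, hme hmin2]
    show B s t * ((∫ u in (0:ℝ)..s, E u s * m (min u t)) + F s * m (min s t))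
        = B' s t * ((∫ u in (0:ℝ)..s, E' u s * m' (min u t)) + gF s * m' (min s t))
    rw [hBe hsIcc htIcc, hin, hFe hsIcc, hme hmin1]
  -- transfer right-hand side, first part
  have e3 : (∫ s in (0 : ℝ)..t,
        ((∫ u in s..t, ∫ r in u..T, A' r u t * E' s r) +
          (∫ r in s..T, A' r s t * ((∫ u in s..r, E' u r) + gF r)) +
          ∫ u in t..T, B' u t * E' s u) * m' s)
      = ∫ s in (0 : ℝ)..t, Lhat1 A B T E F s t * m s := by
    apply intervalIntegral.integral_congr
    intro s hs
    rw [uIcc_of_le ht0] at hs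
    have hsIcc : s ∈ Icc (0:ℝ) T := ⟨hs.1, hs.2.trans htT⟩
    have q1 : (∫ u in s..t, ∫ r in u..T, A' r u t * E' s r)
        = ∫ u in s..t, ∫ r in u..T, A r u t * E s r := by
      apply intervalIntegral.integral_congr
      intro u hu
      rw [uIcc_of_le hs.2] at hu
      have huIcc : u ∈ Icc (0:ℝ) T := ⟨hsIcc.1.trans hu.1, hu.2.trans htT⟩
      dsimp only
      apply intervalIntegral.integral_congr
      intro r hr
      rw [uIcc_of_le huIcc.2] at hr
      have hrIcc : r ∈ Icc (0:ℝ) T := ⟨huIcc.1.trans hr.1, hr.2⟩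
      show A' r u t * E' s r = A r u t * E s r
      rw [hAe hrIcc huIcc htIcc, hEe hsIcc hrIcc]
    have q2 : (∫ r in s..T, A' r s t * ((∫ u in s..r, E' u r) + gF r))
        = ∫ r in s..T, A r s t * ((∫ u in s..r, E u r) + F r) := by
      apply intervalIntegral.integral_congr
      intro r hr
      rw [uIcc_of_le hsIcc.2] at hr
      have hrIcc : r ∈ Icc (0:ℝ) T := ⟨hsIcc.1.trans hr.1, hr.2⟩
      have q21 : (∫ u in s..r, E' u r) = ∫ u in s..r, E u r := by
        apply intervalIntegral.integral_congr
        intro u hu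
        rw [uIcc_of_le hr.1] at hu
        have huIcc : u ∈ Icc (0:ℝ) T := ⟨hsIcc.1.trans hu.1, hu.2.trans hrIcc.2⟩
        show E' u r = E u r
        exact hEe huIcc hrIcc
      show A' r s t * ((∫ u in s..r, E' u r) + gF r) = A r s t * ((∫ u in s..r, E u r) + F r)
      rw [hAe hrIcc hsIcc htIcc, q21, hFe hrIcc]
    have q3 : (∫ u in t..T, B' u t * E' s u) = ∫ u in t..T, B u t * E s u := by
      apply intervalIntegral.integral_congr
      intro u hu
      rw [uIcc_of_le htT] at hu
      have huIcc : u ∈ Icc (0:ℝ) T := ⟨ht0.trans hu.1, hu.2⟩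
      show B' u t * E' s u = B u t * E s u
      rw [hBe huIcc htIcc, hEe hsIcc huIcc]
    show ((∫ u in s..t, ∫ r in u..T, A' r u t * E' s r) +
          (∫ r in s..T, A' r s t * ((∫ u in s..r, E' u r) + gF r)) +
          ∫ u in t..T, B' u t * E' s u) * m' s = Lhat1 A B T E F s t * m s
    rw [q1, q2, q3, hme hsIcc, Lhat1]
  -- transfer right-hand side, second part
  have e4 : (∫ s in t..T, B' s t * ((∫ u in t..s, E' u s) + gF s)) * m' t
      = Lhat2 B T E F t * m t := by
    rw [hme htIcc]
    congr 1
    apply intervalIntegral.integral_congr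
    intro s hs
    rw [uIcc_of_le htT] at hs
    have hsIcc : s ∈ Icc (0:ℝ) T := ⟨ht0.trans hs.1, hs.2⟩
    have q1 : (∫ u in t..s, E' u s) = ∫ u in t..s, E u s := by
      apply intervalIntegral.integral_congr
      intro u hu
      rw [uIcc_of_le hs.1] at hu
      have huIcc : u ∈ Icc (0:ℝ) T := ⟨ht0.trans hu.1, hu.2.trans hsIcc.2⟩
      show E' u s = E u s
      exact hEe huIcc hsIcc
    show B' s t * ((∫ u in t..s, E' u s) + gF s) = B s t * ((∫ u in t..s, E u s) + F s)
    rw [hBe hsIcc htIcc, q1, hFe hsIcc]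
  rw [e1, e2, hkey, e3, e4]
end

section
/- Let T > 0, let A : [0,T] → ℝ be continuously differentiable with A(T) = 0, and let m₀ ≤ m₁ be real numbers. Then: (a) for every nondecreasing function g : [0,T] → ℝ with g(0) = m₀ and m₀ ≤ g(t) ≤ m₁ for all t, one has ∫₀^T A'(s)·g(s) ds ≤ −m₀·A(0) − (m₁ − m₀)·min(0, min_{t∈[0,T]} A(t)); (b) this bound is attained: if min_{t∈[0,T]} A(t) < 0 and t_c ∈ [0,T] is a minimizer of A (necessarily t_c < T), then equality holds for the step function g* defined by g*(t) = m₀ for t ∈ [0, t_c] and g*(t) = m₁ for t ∈ (t_c, T]; if min_{t∈[0,T]} A(t) ≥ 0, equality holds for the constant function g ≡ m₀. -/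
open Set MeasureTheory

private lemma ftc_aux (T : ℝ) (A A' : ℝ → ℝ)
    (hA'cont : ContinuousOn A' (Icc 0 T))
    (hderiv : ∀ t ∈ Icc (0 : ℝ) T, HasDerivWithinAt A (A' t) (Icc 0 T) t)
    {a b : ℝ} (ha : a ∈ Icc (0:ℝ) T) (hb : b ∈ Icc (0:ℝ) T) (hab : a ≤ b) :
    ∫ s in a..b, A' s = A b - A a := by
  have hsub : Icc a b ⊆ Icc 0 T := Icc_subset_Icc ha.1 hb.2
  refine intervalIntegral.integral_eq_sub_of_hasDeriv_right_of_le hab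
    (fun t ht => ((hderiv t (hsub ht)).continuousWithinAt).mono hsub)
    (fun x hx => ?_) ?_
  · have hx0T : x ∈ Ioo (0:ℝ) T := ⟨lt_of_le_of_lt ha.1 hx.1, lt_of_lt_of_le hx.2 hb.2⟩
    exact (hderiv x ⟨hx0T.1.le, hx0T.2.le⟩).mono_of_mem_nhdsWithin
      (nhdsWithin_le_nhds (Icc_mem_nhds hx0T.1 hx0T.2))
  · have : ContinuousOn A' (uIcc a b) := by
      rw [uIcc_of_le hab]; exact hA'cont.mono hsub
    exact this.intervalIntegrable

private lemma key_aux (T : ℝ) (hT : 0 < T) (A A' Ab : ℝ → ℝ)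
    (hA'cont : ContinuousOn A' (Icc 0 T))
    (hderiv : ∀ t ∈ Icc (0 : ℝ) T, HasDerivWithinAt A (A' t) (Icc 0 T) t)
    (hAT : A T = 0)
    (hAbc : Continuous Ab) (hAbeq : EqOn Ab A' (Icc 0 T))
    (K : ℝ) (hK : ∀ s, ‖Ab s‖ ≤ K)
    (M C : ℝ) (hM : 0 ≤ M) (hC0 : 0 ≤ C) (hC : ∀ t ∈ Icc (0:ℝ) T, -A t ≤ C)
    (h : ℝ → ℝ) (hmono : Monotone h) (hbd : ∀ s, 0 ≤ h s ∧ h s ≤ M) :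
    ∫ s in Ioc (0:ℝ) T, Ab s * h s ≤ M * C := by
  set μ := volume.restrict (Ioc (0:ℝ) T) with hμ
  set ν := volume.restrict (Ioc (0:ℝ) M) with hν
  haveI hμf : IsFiniteMeasure μ := by
    constructor; rw [hμ, Measure.restrict_apply_univ]; exact measure_Ioc_lt_top
  haveI hνf : IsFiniteMeasure ν := by
    constructor; rw [hν, Measure.restrict_apply_univ]; exact measure_Ioc_lt_top
  set F : ℝ → ℝ → ℝ := fun s y => if y < h s then Ab s else 0 with hF
  have hK0 : 0 ≤ K := le_trans (norm_nonneg _) (hK 0)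
  have hUncurry : Function.uncurry F = fun p : ℝ × ℝ =>
      ({p : ℝ × ℝ | p.2 < h p.1}).indicator (fun p => Ab p.1) p := by
    funext p
    by_cases hp : p.2 < h p.1 <;>
      simp [Function.uncurry, hF, hp, indicator_of_mem, indicator_of_notMem, mem_setOf_eq]
  have hU : MeasurableSet {p : ℝ × ℝ | p.2 < h p.1} :=
    measurableSet_lt measurable_snd (hmono.measurable.comp measurable_fst)
  have hFmeas : Measurable (Function.uncurry F) := by
    rw [hUncurry]
    exact (hAbc.measurable.comp measurable_fst).indicator hU
  have hFint : Integrable (Function.uncurry F) (μ.prod ν) := by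
    refine Integrable.mono' (integrable_const K) hFmeas.aestronglyMeasurable ?_
    refine Filter.Eventually.of_forall fun p => ?_
    by_cases hp : p.2 < h p.1
    · simpa [Function.uncurry, hF, hp] using hK p.1
    · simp [Function.uncurry, hF, hp, hK0]
  have step1 : ∀ s, Ab s * h s = ∫ y, F s y ∂ν := by
    intro s
    have h1 : (fun y => F s y) = (Iio (h s)).indicator (fun _ => Ab s) := by
      funext y
      by_cases hy : y < h s <;> simp [hF, hy, indicator, mem_Iio]
    rw [h1, hν, setIntegral_indicator measurableSet_Iio]
    have h2 : Ioc 0 M ∩ Iio (h s) = Ioo 0 (h s) := by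
      ext y
      constructor
      · rintro ⟨⟨hy1, _⟩, hy3⟩; exact ⟨hy1, hy3⟩
      · rintro ⟨hy1, hy3⟩; exact ⟨⟨hy1, le_trans hy3.le (hbd s).2⟩, hy3⟩
    rw [h2, setIntegral_const, Real.volume_real_Ioo_of_le (a := 0) (b := h s) ?_, smul_eq_mul]
    · ring
    · linarith [(hbd s).1]
  have inner_le : ∀ y, (∫ s, F s y ∂μ) ≤ C := by
    intro y
    have h1 : (fun s => F s y) = ({s : ℝ | y < h s}).indicator Ab := by
      funext s
      by_cases hs : y < h s <;> simp [hF, hs, indicator, mem_setOf_eq]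
    have hSy : MeasurableSet {s : ℝ | y < h s} :=
      measurableSet_lt measurable_const hmono.measurable
    rw [h1, hμ, setIntegral_indicator hSy]
    set S := Ioc (0:ℝ) T ∩ {s : ℝ | y < h s} with hS
    rcases S.eq_empty_or_nonempty with hSe | ⟨s₀, hs₀⟩
    · rw [hSe]; simpa using hC0
    · set ty := sInf S with hty
      have hbddS : BddBelow S := ⟨0, fun s hs => hs.1.1.le⟩
      have hty0 : 0 ≤ ty := le_csInf ⟨s₀, hs₀⟩ (fun s hs => hs.1.1.le)
      have htyT : ty ≤ T := (csInf_le hbddS hs₀).trans hs₀.1.2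
      have hsub1 : Ioc ty T ⊆ S := by
        intro s hs
        obtain ⟨s₁, hs₁, hlt⟩ := exists_lt_of_csInf_lt ⟨s₀, hs₀⟩ hs.1
        exact ⟨⟨lt_of_le_of_lt hty0 hs.1, hs.2⟩, lt_of_lt_of_le hs₁.2 (hmono hlt.le)⟩
      have hae : S =ᵐ[volume] Ioc ty T := by
        rw [MeasureTheory.ae_eq_set]
        constructor
        · refine measure_mono_null (fun s hs => ?_) (measure_singleton ty)
          rcases hs with ⟨hsS, hsn⟩
          have h1 : ty ≤ s := csInf_le hbddS hsS
          have h2 : s ≤ ty := by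
            by_contra hcon
            exact hsn ⟨lt_of_not_ge hcon, hsS.1.2⟩
          exact le_antisymm h2 h1
        · rw [diff_eq_empty.mpr hsub1]; exact measure_empty
      rw [setIntegral_congr_set hae]
      have heq : ∫ s in Ioc ty T, Ab s = ∫ s in ty..T, A' s := by
        rw [intervalIntegral.integral_of_le htyT]
        exact setIntegral_congr_fun measurableSet_Ioc
          (fun s hs => hAbeq ⟨le_trans hty0 hs.1.le, hs.2⟩)
      rw [heq, ftc_aux T A A' hA'cont hderiv ⟨hty0, htyT⟩ ⟨hT.le, le_refl T⟩ htyT, hAT]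
      have := hC ty ⟨hty0, htyT⟩
      linarith
  have hfun : (fun s => Ab s * h s) = fun s => ∫ y, F s y ∂ν := funext step1
  calc ∫ s in Ioc (0:ℝ) T, Ab s * h s = ∫ s, (∫ y, F s y ∂ν) ∂μ := by rw [← hμ]; rw [hfun]
    _ = ∫ y, ∫ s, F s y ∂μ ∂ν := integral_integral_swap hFint
    _ ≤ ∫ _, C ∂ν := integral_mono hFint.integral_prod_right (integrable_const C) inner_le
    _ = M * C := by
        rw [integral_const, hν, measureReal_restrict_apply_univ, Real.volume_real_Ioc_of_le hM,
          smul_eq_mul]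
        ring

theorem optimal_information_revelation
    (T : ℝ) (hT : 0 < T) (A A' : ℝ → ℝ)
    (hA'cont : ContinuousOn A' (Icc 0 T))
    (hderiv : ∀ t ∈ Icc (0 : ℝ) T, HasDerivWithinAt A (A' t) (Icc 0 T) t)
    (hAT : A T = 0) (m₀ m₁ : ℝ) (hm : m₀ ≤ m₁) :
    -- (a) upper bound for every admissible nondecreasing `g`
    (∀ g : ℝ → ℝ, MonotoneOn g (Icc 0 T) → g 0 = m₀ →
      (∀ t ∈ Icc (0 : ℝ) T, m₀ ≤ g t ∧ g t ≤ m₁) →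
      ∫ s in (0 : ℝ)..T, A' s * g s ≤
        -m₀ * A 0 - (m₁ - m₀) * min 0 (sInf (A '' Icc 0 T))) ∧
    -- (b) attainment when the minimum of `A` is negative
    (∀ tc ∈ Icc (0 : ℝ) T, A tc = sInf (A '' Icc 0 T) → sInf (A '' Icc 0 T) < 0 →
      tc < T ∧
      ∫ s in (0 : ℝ)..T, A' s * (if s ≤ tc then m₀ else m₁) =
        -m₀ * A 0 - (m₁ - m₀) * min 0 (sInf (A '' Icc 0 T))) ∧
    -- (b') attainment by the constant `m₀` when the minimum of `A` is nonnegative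
    (0 ≤ sInf (A '' Icc 0 T) →
      ∫ s in (0 : ℝ)..T, A' s * m₀ =
        -m₀ * A 0 - (m₁ - m₀) * min 0 (sInf (A '' Icc 0 T))) := by
  have h0T : (0:ℝ) ∈ Icc (0:ℝ) T := ⟨le_refl 0, hT.le⟩
  have hTT : T ∈ Icc (0:ℝ) T := ⟨hT.le, le_refl T⟩
  have hftc : ∀ {a b : ℝ}, a ∈ Icc (0:ℝ) T → b ∈ Icc (0:ℝ) T → a ≤ b →
      ∫ s in a..b, A' s = A b - A a := fun ha hb hab =>
    ftc_aux T A A' hA'cont hderiv ha hb hab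
  set mA := sInf (A '' Icc 0 T) with hmA
  have hAcont : ContinuousOn A (Icc 0 T) := fun t ht => (hderiv t ht).continuousWithinAt
  have hbdd : BddBelow (A '' Icc 0 T) :=
    (isCompact_Icc.image_of_continuousOn hAcont).bddBelow
  have hCle : ∀ t ∈ Icc (0:ℝ) T, min 0 mA ≤ A t := fun t ht =>
    le_trans (min_le_right _ _) (csInf_le hbdd (mem_image_of_mem _ ht))
  refine ⟨?_, ?_, ?_⟩
  · -- part (a)
    intro g hgmono hg0 hgbd
    set M := m₁ - m₀ with hM
    set C := -(min 0 mA) with hC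
    have hM0 : 0 ≤ M := by rw [hM]; linarith
    have hC0 : 0 ≤ C := by
      have : min (0:ℝ) mA ≤ 0 := min_le_left _ _
      rw [hC]; linarith
    have hCb : ∀ t ∈ Icc (0:ℝ) T, -A t ≤ C := fun t ht => by
      have := hCle t ht; rw [hC]; linarith
    set c : ℝ → ℝ := fun s => max 0 (min s T) with hc
    have hcc : Continuous c := continuous_const.max (continuous_id.min continuous_const)
    have hcmem : ∀ s, c s ∈ Icc (0:ℝ) T := fun s =>
      ⟨le_max_left _ _, max_le hT.le (min_le_right _ _)⟩
    have hcmono : Monotone c := fun a b hab =>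
      max_le_max (le_refl 0) (min_le_min hab (le_refl T))
    have hceq : ∀ s ∈ Icc (0:ℝ) T, c s = s := fun s hs => by
      rw [hc]; simp only; rw [min_eq_left hs.2, max_eq_right hs.1]
    set Ab : ℝ → ℝ := fun s => A' (c s) with hAb
    have hAbc : Continuous Ab := hA'cont.comp_continuous hcc hcmem
    have hAbeq : EqOn Ab A' (Icc 0 T) := fun s hs => by rw [hAb]; simp only; rw [hceq s hs]
    obtain ⟨K, hK⟩ := isCompact_Icc.exists_bound_of_continuousOn hA'cont
    have hKg : ∀ s, ‖Ab s‖ ≤ K := fun s => hK _ (hcmem s)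
    set h : ℝ → ℝ := fun s => g (c s) - m₀ with hh
    have hhmono : Monotone h := fun a b hab =>
      sub_le_sub_right (hgmono (hcmem a) (hcmem b) (hcmono hab)) _
    have hhbd : ∀ s, 0 ≤ h s ∧ h s ≤ M := fun s =>
      ⟨sub_nonneg.mpr (hgbd (c s) (hcmem s)).1,
        sub_le_sub_right (hgbd (c s) (hcmem s)).2 m₀⟩
    have key := key_aux T hT A A' Ab hA'cont hderiv hAT hAbc hAbeq K hKg M C hM0 hC0 hCb
      h hhmono hhbd
    haveI : IsFiniteMeasure (volume.restrict (Ioc (0:ℝ) T)) := by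
      constructor; rw [Measure.restrict_apply_univ]; exact measure_Ioc_lt_top
    have hint1 : Integrable (fun s => Ab s * h s) (volume.restrict (Ioc (0:ℝ) T)) := by
      refine Integrable.mono' (integrable_const (K * M))
        ((hAbc.measurable.mul hhmono.measurable).aestronglyMeasurable) ?_
      refine Filter.Eventually.of_forall fun s => ?_
      have h1 := hhbd s
      have h2 := hKg s
      rw [norm_mul]
      have h3 : ‖h s‖ ≤ M := by rw [Real.norm_eq_abs, abs_of_nonneg h1.1]; exact h1.2
      exact mul_le_mul h2 h3 (norm_nonneg _) (le_trans (norm_nonneg _) h2)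
    have hint2 : Integrable (fun s => Ab s * m₀) (volume.restrict (Ioc (0:ℝ) T)) :=
      (hAbc.mul continuous_const).integrableOn_Ioc
    have e1 : ∫ s in (0:ℝ)..T, A' s * g s
        = ∫ s in Ioc (0:ℝ) T, (Ab s * h s + Ab s * m₀) := by
      rw [intervalIntegral.integral_of_le hT.le]
      refine setIntegral_congr_fun measurableSet_Ioc fun s hs => ?_
      have hs' : s ∈ Icc (0:ℝ) T := ⟨hs.1.le, hs.2⟩
      have e2 : A' s = Ab s := (hAbeq hs').symm
      have e3 : h s = g s - m₀ := by rw [hh]; simp only; rw [hceq s hs']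
      rw [e2, e3]; ring
    have e4 : ∫ s in Ioc (0:ℝ) T, Ab s * m₀ = (A T - A 0) * m₀ := by
      rw [integral_mul_const]
      have e5 : ∫ s in Ioc (0:ℝ) T, Ab s = ∫ s in (0:ℝ)..T, A' s := by
        rw [intervalIntegral.integral_of_le hT.le]
        exact setIntegral_congr_fun measurableSet_Ioc fun s hs => hAbeq ⟨hs.1.le, hs.2⟩
      rw [e5, hftc h0T hTT hT.le]
    rw [e1, integral_add hint1 hint2, e4, hAT]
    have e6 : -m₀ * A 0 - (m₁ - m₀) * min 0 mA = M * C + (0 - A 0) * m₀ := by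
      rw [hC, hM]; ring
    rw [e6]
    exact add_le_add_left key _
  · -- part (b)
    intro tc htc hAtc hneg
    have htcT : tc < T := lt_of_le_of_ne htc.2 (fun he => by
      rw [he, hAT] at hAtc; rw [← hAtc] at hneg; exact absurd hneg (lt_irrefl 0))
    constructor
    · exact htcT
    · have i1 : IntervalIntegrable (fun s => A' s * (if s ≤ tc then m₀ else m₁)) volume 0 tc := by
        rw [intervalIntegrable_iff_integrableOn_Ioc_of_le htc.1]
        have base : IntegrableOn (fun s => A' s * m₀) (Ioc 0 tc) volume :=
          (((hA'cont.mono (Icc_subset_Icc (le_refl 0) htc.2)).mul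
            continuousOn_const).integrableOn_Icc).mono_set Ioc_subset_Icc_self
        exact base.congr_fun (fun s hs => by simp [hs.2]) measurableSet_Ioc
      have i2 : IntervalIntegrable (fun s => A' s * (if s ≤ tc then m₀ else m₁)) volume tc T := by
        rw [intervalIntegrable_iff_integrableOn_Ioc_of_le htc.2]
        have base : IntegrableOn (fun s => A' s * m₁) (Ioc tc T) volume :=
          (((hA'cont.mono (Icc_subset_Icc htc.1 (le_refl T))).mul
            continuousOn_const).integrableOn_Icc).mono_set Ioc_subset_Icc_self
        exact base.congr_fun (fun s hs => by simp [not_le.mpr hs.1]) measurableSet_Ioc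
      have h1 : ∫ s in (0:ℝ)..tc, A' s * (if s ≤ tc then m₀ else m₁) = (A tc - A 0) * m₀ := by
        have heq : EqOn (fun s => A' s * (if s ≤ tc then m₀ else m₁))
            (fun s => A' s * m₀) (uIcc 0 tc) := by
          intro s hs
          rw [uIcc_of_le htc.1] at hs
          simp [hs.2]
        rw [intervalIntegral.integral_congr heq, intervalIntegral.integral_mul_const,
          hftc h0T htc htc.1]
      have h2 : ∫ s in tc..T, A' s * (if s ≤ tc then m₀ else m₁) = (A T - A tc) * m₁ := by
        have heq : ∀ᵐ s ∂(volume : Measure ℝ), s ∈ Set.uIoc tc T →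
            (A' s * (if s ≤ tc then m₀ else m₁)) = A' s * m₁ := by
          refine Filter.Eventually.of_forall fun s hs => ?_
          rw [uIoc_of_le htc.2] at hs
          rw [if_neg (not_le.mpr hs.1)]
        rw [intervalIntegral.integral_congr_ae heq, intervalIntegral.integral_mul_const,
          hftc htc hTT htc.2]
      rw [← intervalIntegral.integral_add_adjacent_intervals i1 i2, h1, h2, hAT,
        min_eq_right hneg.le, ← hAtc]
      ring
  · -- part (b')
    intro hpos
    rw [intervalIntegral.integral_mul_const, hftc h0T hTT hT.le, hAT, min_eq_left hpos]
    ring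
end
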